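/- Let R be a ring, M a right R-module, W = End_R(M), and α, β anti-endomorphisms of W. If there exists a unit u ∈ W such that the inner automorphism φ(w) = u w u⁻¹ satisfies φ ∘ α = β ∘ φ, then b_α and b_β are weakly isometric. Conversely, if b_α and b_β are both right regular and weakly isometric, then there exists a unit u ∈ W such that the inner automorphism φ(w) = u w u⁻¹ satisfies φ ∘ α = β ∘ φ. -/

import Mathlib

open MulOpposite TensorProduct Function

universe u v w v'

section Core

/-- An anti-endomorphism of a ring: additive, unital, reverses multiplication. -/
def IsAntiEndo {W : Type*} [Ring W] (α : W → W) : Prop :=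
  (∀ u v : W, α (u + v) = α u + α v) ∧ α 1 = 1 ∧ ∀ u v : W, α (u * v) = α v * α u

/-- An anti-automorphism of a ring: a bijective anti-endomorphism. -/
def IsAntiAuto {W : Type*} [Ring W] (α : W → W) : Prop :=
  IsAntiEndo α ∧ Function.Bijective α

/-- An inner automorphism of a ring: conjugation by a unit. -/
def IsInnerAut {W : Type*} [Ring W] (φ : W → W) : Prop :=
  ∃ u : Wˣ, ∀ w : W, φ w = ↑u * w * ↑u⁻¹

variable (R : Type u) [Ring R]

/-- A double `R`-module structure on the additive group `K`: two commuting
right `R`-module structures `m0` and `m1`. -/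
structure DoubleModule (K : Type v) [AddCommGroup K] where
  m0 : K → R → K
  m1 : K → R → K
  m0_add_left : ∀ (k k' : K) (r : R), m0 (k + k') r = m0 k r + m0 k' r
  m0_add_right : ∀ (k : K) (r r' : R), m0 k (r + r') = m0 k r + m0 k r'
  m0_mul : ∀ (k : K) (r r' : R), m0 k (r * r') = m0 (m0 k r) r'
  m0_one : ∀ k : K, m0 k 1 = k
  m1_add_left : ∀ (k k' : K) (r : R), m1 (k + k') r = m1 k r + m1 k' r
  m1_add_right : ∀ (k : K) (r r' : R), m1 k (r + r') = m1 k r + m1 k r'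
  m1_mul : ∀ (k : K) (r r' : R), m1 k (r * r') = m1 (m1 k r) r'
  m1_one : ∀ k : K, m1 k 1 = k
  comm : ∀ (k : K) (a b : R), m1 (m0 k a) b = m0 (m1 k b) a

variable {R}

/-- A homomorphism of double `R`-modules. -/
def IsDoubleHom {K : Type v} {K' : Type w} [AddCommGroup K] [AddCommGroup K']
    (DK : DoubleModule R K) (DK' : DoubleModule R K') (f : K → K') : Prop :=
  (∀ k k' : K, f (k + k') = f k + f k') ∧
  (∀ (k : K) (r : R), f (DK.m0 k r) = DK'.m0 (f k) r) ∧
  (∀ (k : K) (r : R), f (DK.m1 k r) = DK'.m1 (f k) r)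

/-- An isomorphism of double `R`-modules. -/
def IsDoubleIso {K : Type v} {K' : Type w} [AddCommGroup K] [AddCommGroup K']
    (DK : DoubleModule R K) (DK' : DoubleModule R K') (f : K → K') : Prop :=
  IsDoubleHom DK DK' f ∧ Function.Bijective f

/-- An anti-automorphism of a double `R`-module: an additive bijection exchanging
the two module structures. -/
def IsDoubleAntiAuto {K : Type v} [AddCommGroup K] (DK : DoubleModule R K) (θ : K → K) : Prop :=
  Function.Bijective θ ∧ (∀ k k' : K, θ (k + k') = θ k + θ k') ∧
  (∀ (k : K) (r : R), θ (DK.m0 k r) = DK.m1 (θ k) r) ∧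
  (∀ (k : K) (r : R), θ (DK.m1 k r) = DK.m0 (θ k) r)

variable (R)

/-- A general bilinear form on a right `R`-module `M` (encoded as a module over `Rᵐᵒᵖ`)
with values in a double `R`-module `(K, DK)`. -/
structure GBF (M : Type v) [AddCommGroup M] [Module Rᵐᵒᵖ M]
    (K : Type w) [AddCommGroup K] (DK : DoubleModule R K) where
  b : M → M → K
  add_left : ∀ x x' y : M, b (x + x') y = b x y + b x' y
  add_right : ∀ x y y' : M, b x (y + y') = b x y + b x y'
  smul_left : ∀ (x y : M) (r : R), b (op r • x) y = DK.m0 (b x y) r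
  smul_right : ∀ (x y : M) (r : R), b x (op r • y) = DK.m1 (b x y) r

variable {R}

namespace GBF

variable {M : Type v} [AddCommGroup M] [Module Rᵐᵒᵖ M]
  {K : Type w} [AddCommGroup K] {DK : DoubleModule R K}

/-- The right adjoint of `β` is injective. -/
def RightInjective (β : GBF R M K DK) : Prop :=
  ∀ x x' : M, (∀ y : M, β.b y x = β.b y x') → x = x'

/-- The right adjoint of `β` is bijective onto `Hom_R(M, K₀)`. -/
def RightRegular (β : GBF R M K DK) : Prop :=
  β.RightInjective ∧
  ∀ f : M → K, (∀ y y' : M, f (y + y') = f y + f y') →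
    (∀ (y : M) (r : R), f (op r • y) = DK.m0 (f y) r) →
    ∃ x : M, ∀ y : M, f y = β.b y x

/-- The left adjoint of `β` is injective. -/
def LeftInjective (β : GBF R M K DK) : Prop :=
  ∀ x x' : M, (∀ y : M, β.b x y = β.b x' y) → x = x'

/-- The left adjoint of `β` is bijective onto `Hom_R(M, K₁)`. -/
def LeftRegular (β : GBF R M K DK) : Prop :=
  β.LeftInjective ∧
  ∀ f : M → K, (∀ y y' : M, f (y + y') = f y + f y') →
    (∀ (y : M) (r : R), f (op r • y) = DK.m1 (f y) r) →
    ∃ x : M, ∀ y : M, f y = β.b x y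

/-- `α` is an adjoint anti-endomorphism for `β`: `β(w x, y) = β(x, α(w) y)`. -/
def IsAdjoint (β : GBF R M K DK) (α : Module.End Rᵐᵒᵖ M → Module.End Rᵐᵒᵖ M) : Prop :=
  ∀ (w : Module.End Rᵐᵒᵖ M) (x y : M), β.b (w x) y = β.b x (α w y)

/-- Similarity of general bilinear forms on the same module. -/
def Similar {K' : Type v'} [AddCommGroup K'] {DK' : DoubleModule R K'}
    (β : GBF R M K DK) (β' : GBF R M K' DK') : Prop :=
  ∃ f : K → K', IsDoubleIso DK DK' f ∧ ∀ x y : M, β'.b x y = f (β.b x y)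

end GBF

section Kalpha

variable {M : Type v} [AddCommGroup M] [Module Rᵐᵒᵖ M]

/-- The subgroup of `M ⊗_ℤ M` generated by the elements `(w x) ⊗ y - x ⊗ (α w y)`. -/
def kalphaRel (α : Module.End Rᵐᵒᵖ M → Module.End Rᵐᵒᵖ M) : Submodule ℤ (M ⊗[ℤ] M) :=
  Submodule.span ℤ
    {z | ∃ (w : Module.End Rᵐᵒᵖ M) (x y : M), z = (w x) ⊗ₜ[ℤ] y - x ⊗ₜ[ℤ] (α w y)}

/-- `K_α`, the quotient of `M ⊗_ℤ M` by the relations `(w x) ⊗ y = x ⊗ (α w y)`. -/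
abbrev Kalpha (α : Module.End Rᵐᵒᵖ M → Module.End Rᵐᵒᵖ M) : Type _ :=
  (M ⊗[ℤ] M) ⧸ kalphaRel α

/-- The map `x ⊗ y ↦ (x·r) ⊗ y` on `M ⊗_ℤ M`. -/
noncomputable def smulLeftMap (r : R) : (M ⊗[ℤ] M) →ₗ[ℤ] (M ⊗[ℤ] M) :=
  TensorProduct.map ((DistribMulAction.toAddMonoidHom M (op r : Rᵐᵒᵖ)).toIntLinearMap)
    LinearMap.id

/-- The map `x ⊗ y ↦ x ⊗ (y·r)` on `M ⊗_ℤ M`. -/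
noncomputable def smulRightMap (r : R) : (M ⊗[ℤ] M) →ₗ[ℤ] (M ⊗[ℤ] M) :=
  TensorProduct.map LinearMap.id
    ((DistribMulAction.toAddMonoidHom M (op r : Rᵐᵒᵖ)).toIntLinearMap)

theorem kalphaRel_le_left (α : Module.End Rᵐᵒᵖ M → Module.End Rᵐᵒᵖ M) (r : R) :
    kalphaRel α ≤ (kalphaRel α).comap (smulLeftMap (M := M) r) := by
  rw [kalphaRel, Submodule.span_le]
  rintro _ ⟨w, x, y, rfl⟩
  rw [SetLike.mem_coe, Submodule.mem_comap, map_sub]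
  have h1 : smulLeftMap (M := M) r ((w x) ⊗ₜ[ℤ] y) = (w (op r • x)) ⊗ₜ[ℤ] y := by
    (simp [smulLeftMap, map_smul]) <;> rfl
  have h2 : smulLeftMap (M := M) r (x ⊗ₜ[ℤ] (α w y)) = (op r • x) ⊗ₜ[ℤ] (α w y) := by
    (simp [smulLeftMap]) <;> rfl
  rw [h1, h2]
  exact Submodule.subset_span ⟨w, op r • x, y, rfl⟩

theorem kalphaRel_le_right (α : Module.End Rᵐᵒᵖ M → Module.End Rᵐᵒᵖ M) (r : R) :
    kalphaRel α ≤ (kalphaRel α).comap (smulRightMap (M := M) r) := by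
  rw [kalphaRel, Submodule.span_le]
  rintro _ ⟨w, x, y, rfl⟩
  rw [SetLike.mem_coe, Submodule.mem_comap, map_sub]
  have h1 : smulRightMap (M := M) r ((w x) ⊗ₜ[ℤ] y) = (w x) ⊗ₜ[ℤ] (op r • y) := by
    (simp [smulRightMap]) <;> rfl
  have h2 : smulRightMap (M := M) r (x ⊗ₜ[ℤ] (α w y)) = x ⊗ₜ[ℤ] (α w (op r • y)) := by
    (simp [smulRightMap, map_smul]) <;> rfl
  rw [h1, h2]
  exact Submodule.subset_span ⟨w, x, op r • y, rfl⟩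

/-- The `m0`-action on `K_α`. -/
noncomputable def kSmul0 (α : Module.End Rᵐᵒᵖ M → Module.End Rᵐᵒᵖ M) (r : R) :
    Kalpha α →ₗ[ℤ] Kalpha α :=
  Submodule.mapQ _ _ (smulLeftMap r) (kalphaRel_le_left α r)

/-- The `m1`-action on `K_α`. -/
noncomputable def kSmul1 (α : Module.End Rᵐᵒᵖ M → Module.End Rᵐᵒᵖ M) (r : R) :
    Kalpha α →ₗ[ℤ] Kalpha α :=
  Submodule.mapQ _ _ (smulRightMap r) (kalphaRel_le_right α r)

theorem kSmul0_mk (α : Module.End Rᵐᵒᵖ M → Module.End Rᵐᵒᵖ M) (r : R) (t : M ⊗[ℤ] M) :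
    kSmul0 α r (Submodule.Quotient.mk t) = Submodule.Quotient.mk (smulLeftMap r t) := rfl

theorem kSmul1_mk (α : Module.End Rᵐᵒᵖ M → Module.End Rᵐᵒᵖ M) (r : R) (t : M ⊗[ℤ] M) :
    kSmul1 α r (Submodule.Quotient.mk t) = Submodule.Quotient.mk (smulRightMap r t) := rfl

/-- The double `R`-module structure on `K_α`. -/
noncomputable def KalphaDM (α : Module.End Rᵐᵒᵖ M → Module.End Rᵐᵒᵖ M) :
    DoubleModule R (Kalpha α) where
  m0 k r := kSmul0 α r k
  m1 k r := kSmul1 α r k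
  m0_add_left k k' r := map_add _ k k'
  m0_add_right := by
    intro k r r'
    try dsimp only
    induction k using Submodule.Quotient.induction_on with
    | _ t =>
      rw [kSmul0_mk, kSmul0_mk, kSmul0_mk, ← Submodule.Quotient.mk_add]
      congr 1
      induction t with
      | zero => simp
      | tmul x y =>
        show (op (r + r') • x) ⊗ₜ[ℤ] y = (op r • x) ⊗ₜ[ℤ] y + (op r' • x) ⊗ₜ[ℤ] y
        simp [smulLeftMap, op_add, add_smul, TensorProduct.add_tmul]
      | add a b ha hb => rw [map_add, map_add, map_add, ha, hb]; abel
  m0_mul := by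
    intro k r r'
    try dsimp only
    induction k using Submodule.Quotient.induction_on with
    | _ t =>
      rw [kSmul0_mk, kSmul0_mk, kSmul0_mk]
      congr 1
      induction t with
      | zero => simp
      | tmul x y =>
        show (op (r * r') • x) ⊗ₜ[ℤ] y = (op r' • op r • x) ⊗ₜ[ℤ] y
        simp [smulLeftMap, op_mul, mul_smul]
      | add a b ha hb => rw [map_add, map_add, map_add, ha, hb]
  m0_one := by
    intro k
    try dsimp only
    induction k using Submodule.Quotient.induction_on with
    | _ t =>
      rw [kSmul0_mk]
      congr 1
      induction t with
      | zero => simp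
      | tmul x y =>
        show (op (1 : R) • x) ⊗ₜ[ℤ] y = x ⊗ₜ[ℤ] y
        simp [smulLeftMap]
      | add a b ha hb => rw [map_add, ha, hb]
  m1_add_left k k' r := map_add _ k k'
  m1_add_right := by
    intro k r r'
    try dsimp only
    induction k using Submodule.Quotient.induction_on with
    | _ t =>
      rw [kSmul1_mk, kSmul1_mk, kSmul1_mk, ← Submodule.Quotient.mk_add]
      congr 1
      induction t with
      | zero => simp
      | tmul x y =>
        show x ⊗ₜ[ℤ] (op (r + r') • y) = x ⊗ₜ[ℤ] (op r • y) + x ⊗ₜ[ℤ] (op r' • y)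
        simp [smulRightMap, op_add, add_smul, TensorProduct.tmul_add]
      | add a b ha hb => rw [map_add, map_add, map_add, ha, hb]; abel
  m1_mul := by
    intro k r r'
    try dsimp only
    induction k using Submodule.Quotient.induction_on with
    | _ t =>
      rw [kSmul1_mk, kSmul1_mk, kSmul1_mk]
      congr 1
      induction t with
      | zero => simp
      | tmul x y =>
        show x ⊗ₜ[ℤ] (op (r * r') • y) = x ⊗ₜ[ℤ] (op r' • op r • y)
        simp [smulRightMap, op_mul, mul_smul]
      | add a b ha hb => rw [map_add, map_add, map_add, ha, hb]
  m1_one := by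
    intro k
    try dsimp only
    induction k using Submodule.Quotient.induction_on with
    | _ t =>
      rw [kSmul1_mk]
      congr 1
      induction t with
      | zero => simp
      | tmul x y =>
        show x ⊗ₜ[ℤ] (op (1 : R) • y) = x ⊗ₜ[ℤ] y
        simp [smulRightMap]
      | add a b ha hb => rw [map_add, ha, hb]
  comm := by
    intro k a c
    try dsimp only
    induction k using Submodule.Quotient.induction_on with
    | _ t =>
      rw [kSmul0_mk, kSmul1_mk, kSmul1_mk, kSmul0_mk]
      congr 1
      induction t with
      | zero => simp
      | tmul x y => rfl
      | add p q hp hq => rw [map_add, map_add, map_add, map_add, hp, hq]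

/-- The universal general bilinear form `b_α : M × M → K_α`. -/
noncomputable def balpha (α : Module.End Rᵐᵒᵖ M → Module.End Rᵐᵒᵖ M) :
    GBF R M (Kalpha α) (KalphaDM α) where
  b x y := Submodule.Quotient.mk (x ⊗ₜ[ℤ] y)
  add_left x x' y := by
    try dsimp only
    rw [TensorProduct.add_tmul, Submodule.Quotient.mk_add]
  add_right x y y' := by
    try dsimp only
    rw [TensorProduct.tmul_add, Submodule.Quotient.mk_add]
  smul_left x y r := by
    show _ = kSmul0 α r (Submodule.Quotient.mk (x ⊗ₜ[ℤ] y))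
    rw [kSmul0_mk]
    congr 1
  smul_right x y r := by
    show _ = kSmul1 α r (Submodule.Quotient.mk (x ⊗ₜ[ℤ] y))
    rw [kSmul1_mk]
    congr 1

end Kalpha

end Core

/-! Conjugation by a unit `u` of `End_R(M)` intertwining `α` and `β` carries the defining
relations `(w x) ⊗ y = x ⊗ (α w y)` of `K_α` onto those of `K_β` (with `w` replaced by
`u w u⁻¹`), so `u ⊗ u` descends to a double-module isomorphism `K_α ≃ K_β` taking `b_α` to
`b_β`. Conversely, `b_α(w x, y) = b_α(x, α(w) y)`, and a weak isometry `(σ, f)` transports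
this to `b_β(σ x, σ (α(w) z)) = b_β(σ x, β(σ w σ⁻¹) (σ z))`; as `σ` is onto, right injectivity
of `b_β` gives `σ α(w) = β(σ w σ⁻¹) σ`. -/

def ConjIntertwines {W : Type*} [Monoid W] (u : Wˣ) (α β : W → W) : Prop :=
  ∀ w : W, ↑u * α w * ↑u⁻¹ = β (↑u * w * ↑u⁻¹)

theorem ConjIntertwines.inv {W : Type*} [Monoid W] {u : Wˣ} {α β : W → W}
    (h : ConjIntertwines u α β) : ConjIntertwines u⁻¹ β α := by
  intro w
  have hw := h (↑u⁻¹ * w * ↑u)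
  simp only [mul_assoc, Units.mul_inv_cancel_left, Units.mul_inv, mul_one] at hw
  simp [← hw, mul_assoc]

namespace Module.End

variable {S : Type*} [Semiring S] {N : Type*} [AddCommMonoid N] [Module S N]

@[simp]
theorem units_inv_apply_apply (u : (Module.End S N)ˣ) (x : N) :
    (↑u⁻¹ : Module.End S N) ((u : Module.End S N) x) = x := by
  rw [← Module.End.mul_apply, u.inv_mul, Module.End.one_apply]

@[simp]
theorem units_apply_inv_apply (u : (Module.End S N)ˣ) (x : N) :
    (u : Module.End S N) ((↑u⁻¹ : Module.End S N) x) = x := by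
  rw [← Module.End.mul_apply, u.mul_inv, Module.End.one_apply]

end Module.End

namespace GBF

variable {R : Type u} [Ring R] {M : Type v} [AddCommGroup M] [Module Rᵐᵒᵖ M]
  {K : Type w} [AddCommGroup K] {DK : DoubleModule R K}
  {K' : Type v'} [AddCommGroup K'] {DK' : DoubleModule R K'}

def WeaklyIsometric (b : GBF R M K DK) (b' : GBF R M K' DK') : Prop :=
  ∃ (σ : Module.End Rᵐᵒᵖ M) (f : K → K'), Function.Bijective σ ∧ IsDoubleIso DK DK' f ∧
    ∀ x y : M, b'.b (σ x) (σ y) = f (b.b x y)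

theorem conjIntertwines_of_map_eq {b : GBF R M K DK} {b' : GBF R M K' DK'}
    {α β : Module.End Rᵐᵒᵖ M → Module.End Rᵐᵒᵖ M} (hα : b.IsAdjoint α) (hβ : b'.IsAdjoint β)
    (hb' : b'.RightInjective) (u : (Module.End Rᵐᵒᵖ M)ˣ) (f : K → K')
    (hf : ∀ x y : M, b'.b ((u : Module.End Rᵐᵒᵖ M) x) ((u : Module.End Rᵐᵒᵖ M) y) = f (b.b x y)) :
    ConjIntertwines u α β := by
  intro w
  set w' : Module.End Rᵐᵒᵖ M := ↑u * w * ↑u⁻¹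
  set σ : Module.End Rᵐᵒᵖ M := ↑u
  have hw' : ∀ x, w' (σ x) = σ (w x) := fun x => by simp [w', σ]
  have key : ∀ z, σ (α w z) = β w' (σ z) := fun z => hb' _ _ fun y => by
    obtain ⟨x, rfl⟩ : ∃ x, σ x = y := ⟨(↑u⁻¹ : Module.End Rᵐᵒᵖ M) y, by simp [σ]⟩
    calc b'.b (σ x) (σ (α w z)) = f (b.b (w x) z) := by rw [hf, hα]
      _ = b'.b (w' (σ x)) (σ z) := by rw [hw', hf]
      _ = b'.b (σ x) (β w' (σ z)) := hβ _ _ _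
  ext y
  simpa [σ] using key ((↑u⁻¹ : Module.End Rᵐᵒᵖ M) y)

theorem WeaklyIsometric.exists_conjIntertwines {b : GBF R M K DK} {b' : GBF R M K' DK'}
    {α β : Module.End Rᵐᵒᵖ M → Module.End Rᵐᵒᵖ M} (h : b.WeaklyIsometric b')
    (hα : b.IsAdjoint α) (hβ : b'.IsAdjoint β) (hb' : b'.RightInjective) :
    ∃ u : (Module.End Rᵐᵒᵖ M)ˣ, ConjIntertwines u α β := by
  obtain ⟨σ, f, hσ, -, hf⟩ := h
  obtain ⟨u, rfl⟩ := (Module.End.isUnit_iff σ).2 hσ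
  exact ⟨u, conjIntertwines_of_map_eq hα hβ hb' u f hf⟩

end GBF

section Kalpha

variable {R : Type u} [Ring R] {M : Type v} [AddCommGroup M] [Module Rᵐᵒᵖ M]
  {α β : Module.End Rᵐᵒᵖ M → Module.End Rᵐᵒᵖ M}

theorem balpha_isAdjoint (α : Module.End Rᵐᵒᵖ M → Module.End Rᵐᵒᵖ M) :
    (balpha (R := R) α).IsAdjoint α := fun w x y =>
  (Submodule.Quotient.eq _).2 (Submodule.subset_span ⟨w, x, y, rfl⟩)

theorem kalpha_linearMap_ext {N : Type*} [AddCommGroup N] {f g : Kalpha α →ₗ[ℤ] N}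
    (h : ∀ x y : M, f ((balpha (R := R) α).b x y) = g ((balpha α).b x y)) : f = g :=
  Submodule.linearMap_qext _ (TensorProduct.ext' h)

@[simp]
theorem smulLeftMap_tmul (r : R) (x y : M) : smulLeftMap r (x ⊗ₜ[ℤ] y) = (op r • x) ⊗ₜ y := rfl

@[simp]
theorem smulRightMap_tmul (r : R) (x y : M) : smulRightMap r (x ⊗ₜ[ℤ] y) = x ⊗ₜ (op r • y) := rfl

variable (R M) in
noncomputable def tensorSquare : Module.End Rᵐᵒᵖ M →* Module.End ℤ (M ⊗[ℤ] M) where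
  toFun w := TensorProduct.map w.toAddMonoidHom.toIntLinearMap w.toAddMonoidHom.toIntLinearMap
  map_one' := TensorProduct.ext' fun _ _ => rfl
  map_mul' _ _ := TensorProduct.ext' fun _ _ => rfl

@[simp]
theorem tensorSquare_tmul (w : Module.End Rᵐᵒᵖ M) (x y : M) :
    tensorSquare R M w (x ⊗ₜ y) = w x ⊗ₜ w y := rfl

theorem kalphaRel_le_comap_tensorSquare {u : (Module.End Rᵐᵒᵖ M)ˣ}
    (h : ConjIntertwines u α β) : kalphaRel α ≤ (kalphaRel β).comap (tensorSquare R M u) := by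
  refine Submodule.span_le.2 ?_
  rintro _ ⟨w, x, y, rfl⟩
  refine Submodule.subset_span ⟨↑u * w * ↑u⁻¹, (u : Module.End Rᵐᵒᵖ M) x,
    (u : Module.End Rᵐᵒᵖ M) y, ?_⟩
  simp [← h w]

noncomputable def kalphaCongr {u : (Module.End Rᵐᵒᵖ M)ˣ} (h : ConjIntertwines u α β) :
    Kalpha α ≃ₗ[ℤ] Kalpha β :=
  LinearEquiv.ofLinearMap
    ((kalphaRel α).mapQ _ (tensorSquare R M u) (kalphaRel_le_comap_tensorSquare h))
    ((kalphaRel β).mapQ _ (tensorSquare R M ↑u⁻¹) (kalphaRel_le_comap_tensorSquare h.inv))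
    (kalpha_linearMap_ext fun x y => by simp [balpha])
    (kalpha_linearMap_ext fun x y => by simp [balpha])

theorem isDoubleIso_kalphaCongr {u : (Module.End Rᵐᵒᵖ M)ˣ} (h : ConjIntertwines u α β) :
    IsDoubleIso (KalphaDM α) (KalphaDM β) (kalphaCongr h) := by
  refine ⟨⟨map_add _, fun k r => ?_, fun k r => ?_⟩, (kalphaCongr h).bijective⟩
  · show ((kalphaCongr h).toLinearMap ∘ₗ kSmul0 α r) k =
      (kSmul0 β r ∘ₗ (kalphaCongr h).toLinearMap) k
    exact LinearMap.congr_fun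
      (kalpha_linearMap_ext fun x y => by simp [balpha, kalphaCongr, kSmul0]) k
  · show ((kalphaCongr h).toLinearMap ∘ₗ kSmul1 α r) k =
      (kSmul1 β r ∘ₗ (kalphaCongr h).toLinearMap) k
    exact LinearMap.congr_fun
      (kalpha_linearMap_ext fun x y => by simp [balpha, kalphaCongr, kSmul1]) k

theorem balpha_weaklyIsometric {u : (Module.End Rᵐᵒᵖ M)ˣ} (h : ConjIntertwines u α β) :
    (balpha α).WeaklyIsometric (balpha β) :=
  ⟨u, kalphaCongr h, (Module.End.isUnit_iff _).1 u.isUnit, isDoubleIso_kalphaCongr h,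
    fun _ _ => rfl⟩

end Kalpha

theorem stmt_3_general {R : Type u} [Ring R] {M : Type v} [AddCommGroup M] [Module Rᵐᵒᵖ M]
    (α β : Module.End Rᵐᵒᵖ M → Module.End Rᵐᵒᵖ M) :
    ((∃ u : (Module.End Rᵐᵒᵖ M)ˣ,
        ∀ w : Module.End Rᵐᵒᵖ M, ↑u * α w * ↑u⁻¹ = β (↑u * w * ↑u⁻¹)) →
      ∃ (σ : Module.End Rᵐᵒᵖ M) (f : Kalpha (M := M) α → Kalpha (M := M) β),
        Function.Bijective σ ∧ IsDoubleIso (KalphaDM α) (KalphaDM β) f ∧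
        ∀ x y : M, (balpha β).b (σ x) (σ y) = f ((balpha α).b x y)) ∧
    ((balpha α).RightRegular → (balpha β).RightRegular →
      (∃ (σ : Module.End Rᵐᵒᵖ M) (f : Kalpha (M := M) α → Kalpha (M := M) β),
        Function.Bijective σ ∧ IsDoubleIso (KalphaDM α) (KalphaDM β) f ∧
        ∀ x y : M, (balpha β).b (σ x) (σ y) = f ((balpha α).b x y)) →
      ∃ u : (Module.End Rᵐᵒᵖ M)ˣ,
        ∀ w : Module.End Rᵐᵒᵖ M, ↑u * α w * ↑u⁻¹ = β (↑u * w * ↑u⁻¹)) :=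
  ⟨fun ⟨_, hu⟩ => balpha_weaklyIsometric hu, fun _ hβ h =>
    GBF.WeaklyIsometric.exists_conjIntertwines h (balpha_isAdjoint α) (balpha_isAdjoint β) hβ.1⟩

/-- `b_α` and `b_β` are weakly isometric iff (given right regularity for the
converse) there is an inner automorphism `φ(w) = u w u⁻¹` with `φ ∘ α = β ∘ φ`. -/
theorem stmt_3 {R : Type u} [Ring R] {M : Type v} [AddCommGroup M] [Module Rᵐᵒᵖ M]
    (α β : Module.End Rᵐᵒᵖ M → Module.End Rᵐᵒᵖ M)
    (hα : IsAntiEndo α) (hβ : IsAntiEndo β) :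
    ((∃ u : (Module.End Rᵐᵒᵖ M)ˣ,
        ∀ w : Module.End Rᵐᵒᵖ M, ↑u * α w * ↑u⁻¹ = β (↑u * w * ↑u⁻¹)) →
      ∃ (σ : Module.End Rᵐᵒᵖ M) (f : Kalpha (M := M) α → Kalpha (M := M) β),
        Function.Bijective σ ∧ IsDoubleIso (KalphaDM α) (KalphaDM β) f ∧
        ∀ x y : M, (balpha β).b (σ x) (σ y) = f ((balpha α).b x y)) ∧
    ((balpha α).RightRegular → (balpha β).RightRegular →
      (∃ (σ : Module.End Rᵐᵒᵖ M) (f : Kalpha (M := M) α → Kalpha (M := M) β),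
        Function.Bijective σ ∧ IsDoubleIso (KalphaDM α) (KalphaDM β) f ∧
        ∀ x y : M, (balpha β).b (σ x) (σ y) = f ((balpha α).b x y)) →
      ∃ u : (Module.End Rᵐᵒᵖ M)ˣ,
        ∀ w : Module.End Rᵐᵒᵖ M, ↑u * α w * ↑u⁻¹ = β (↑u * w * ↑u⁻¹)) :=
  stmt_3_general α β
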